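/- arXiv:2411.11816 — 5 statements merged into one kernel-verified Lean document; each statement's English description precedes it below -/
import Mathlib

section
/- A commutative ring A is a finitely presented object of the category CommRingCat of commutative rings (i.e., Hom_CommRingCat(A, −) preserves filtered colimits) if and only if there exist a natural number n and a surjective ring homomorphism from the polynomial ring MvPolynomial (Fin n) ℤ onto A; in other words, if and only if A is isomorphic to a quotient of ℤ[x₁,…,xₙ] for some n. -/
open CategoryTheory Limits Opposite

/-- An object `A` of a category `𝒞` is *finitely presented* if the hom-functor
`Hom_𝒞(A, −)` preserves filtered colimits. -/
def CategoryTheory.IsFinitelyPresentedObj {C : Type*} [Category C] (A : C) : Prop :=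
  PreservesFilteredColimits (coyoneda.obj (op A))

/-!
A ring `A` is the directed union of its finitely generated subrings, and this union is a
filtered colimit in `CommRingCat`. If `Hom(A, -)` commutes with it, the identity of `A` factors
through one of these subrings, which is therefore all of `A`; so `A` is a finitely generated
`ℤ`-algebra. Conversely, since `ℤ` is Noetherian a finitely generated `ℤ`-algebra is finitely
presented, and finitely presented `R`-algebras are finitely presentable objects of `Under R`;
taking for `R` the initial ring, `Under R` is `CommRingCat` itself.
-/

universe u

attribute [local instance] Cardinal.fact_isRegular_aleph0

namespace CommRingCat

lemma isFinitelyPresentable_of_finiteType (A : CommRingCat.{u}) [Algebra.FiniteType ℤ A] :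
    IsFinitelyPresentable.{u} A := by
  let hI := isInitial.{u}
  have hfp : (hI.to A).hom.FinitePresentation := by
    have hA : Algebra.FinitePresentation ℤ A :=
      Algebra.FinitePresentation.of_finiteType.mp ‹_›
    have hto : (hI.to A).hom = (algebraMap ℤ A).comp ULift.ringEquiv.toRingHom :=
      congrArg Hom.hom (hI.hom_ext _ (ofHom _))
    rw [hto]
    exact (RingHom.finitePresentation_algebraMap.mpr hA).comp
      (.of_bijective ULift.ringEquiv.bijective)
  have := isFinitelyPresentable_under _ (Under.mk (hI.to A)) hfp
  exact isCardinalPresentable_of_equivalence (Under.mk (hI.to A)) _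
    (Under.equivalenceOfIsInitial hI)

section DirectedUnion

variable {R : Type*} [CommRing R] {A : Type u} [CommRing A] [Algebra R A]
  {ι : Type u} [Preorder ι] (S : ι →o Subalgebra R A)

def subalgebraDiagram : ι ⥤ CommRingCat.{u} where
  obj i := of (S i)
  map f := ofHom (Subalgebra.inclusion (S.monotone f.le)).toRingHom

def subalgebraCocone : Cocone (subalgebraDiagram S) where
  pt := of A
  ι := { app i := ofHom (S i).val.toRingHom }

variable [IsDirected ι (· ≤ ·)] [Nonempty ι]

noncomputable def isColimitSubalgebraCocone (hS : ∀ a, ∃ i, a ∈ S i) :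
    IsColimit (subalgebraCocone S) := by
  have : ReflectsColimitsOfShape ι (forget CommRingCat) :=
    reflectsColimitsOfShape_of_reflectsIsomorphisms
  refine isColimitOfReflects (forget CommRingCat) (Types.FilteredColimit.isColimitOf _ _ ?_ ?_)
  · intro a
    obtain ⟨i, hi⟩ := hS a
    exact ⟨i, ⟨a, hi⟩, rfl⟩
  · intro i j x y hxy
    obtain ⟨k, hik, hjk⟩ := directed_of (· ≤ ·) i j
    exact ⟨k, homOfLE hik, homOfLE hjk, Subtype.ext hxy⟩

lemma exists_subalgebra_eq_top_of_isFinitelyPresentable [IsFinitelyPresentable.{u} (of A)]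
    (hS : ∀ a, ∃ i, a ∈ S i) : ∃ i, S i = ⊤ := by
  obtain ⟨i, s, hs⟩ := IsFinitelyPresentable.exists_hom_of_isColimit (X := of A)
    (isColimitSubalgebraCocone S hS) (𝟙 _)
  refine ⟨i, eq_top_iff.mpr fun a _ => ?_⟩
  rw [← show (S i).val (s a) = a from congr($hs a)]
  exact (s a).2

end DirectedUnion

lemma finiteType_of_isFinitelyPresentable (A : CommRingCat.{u})
    [IsFinitelyPresentable.{u} A] : Algebra.FiniteType ℤ A := by
  let adjoinFinset : Finset A →o Subalgebra ℤ A :=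
    ⟨fun s => Algebra.adjoin ℤ s, fun _ _ h => Algebra.adjoin_mono (Finset.coe_subset.mpr h)⟩
  obtain ⟨s, hs⟩ := exists_subalgebra_eq_top_of_isFinitelyPresentable adjoinFinset
    fun a => ⟨{a}, Algebra.subset_adjoin (by simp)⟩
  exact ⟨s, hs⟩

lemma isFinitelyPresentable_iff_finiteType (A : CommRingCat.{u}) :
    IsFinitelyPresentable.{u} A ↔ Algebra.FiniteType ℤ A :=
  ⟨fun _ => finiteType_of_isFinitelyPresentable A,
    fun _ => isFinitelyPresentable_of_finiteType A⟩

end CommRingCat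

/-- A commutative ring `A` is a finitely presented object of `CommRingCat` if and only if
it is (the target of a surjection from, i.e. isomorphic to a quotient of) `ℤ[x₁,…,xₙ]`
for some `n`. -/
theorem commRingCat_isFinitelyPresentedObj_iff (A : CommRingCat) :
    CategoryTheory.IsFinitelyPresentedObj A ↔
      ∃ (n : ℕ) (f : MvPolynomial (Fin n) ℤ →+* A), Function.Surjective f := by
  rw [IsFinitelyPresentedObj, ← isFinitelyPresentable_iff_preservesFilteredColimits,
    CommRingCat.isFinitelyPresentable_iff_finiteType,
    Algebra.FiniteType.iff_quotient_mvPolynomial'']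
  exact ⟨fun ⟨n, f, hf⟩ => ⟨n, f.toRingHom, hf⟩,
    fun ⟨n, f, hf⟩ => ⟨n, f.toIntAlgHom, hf⟩⟩
end

section
/- Let R be a commutative ring. A commutative R-algebra A is a finitely presented object of the category CommAlgCat R of commutative R-algebras (i.e., Hom over commutative R-algebras out of A preserves filtered colimits) if and only if there exist a natural number n and a surjective R-algebra homomorphism from the polynomial algebra MvPolynomial (Fin n) R onto A whose kernel is a finitely generated ideal; in other words, if and only if A is isomorphic as an R-algebra to a quotient of R[x₁,…,xₙ] by a finitely generated ideal. -/
open CategoryTheory Limits Opposite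

universe u

/-- The category of commutative `R`-algebras, realized as the full subcategory of the
category `AlgebraCat R` of `R`-algebras consisting of the commutative ones. -/
abbrev CommAlgCatFS (R : Type u) [CommRing R] :=
  CategoryTheory.ObjectProperty.FullSubcategory (fun A : AlgCat.{u} R => ∀ x y : A, x * y = y * x)

/-- A commutative algebra `A`, as an object of `CommAlgCat R`. -/
abbrev CommAlgCatFS.of (R : Type u) [CommRing R] (A : Type u) [CommRing A] [Algebra R A] :
    CommAlgCatFS R :=
  ⟨AlgCat.of R A, fun x y => mul_comm x y⟩

/-!
Finitely presented algebras are finitely presentable in `Under R`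
(`CommRingCat.isFinitelyPresentable_under`), and this transfers along the equivalence
`CommAlgCatFS R ≌ CommAlgCat R ≌ Under R`.

Conversely, suppose `A` is finitely presentable. Filtered colimits in `CommAlgCatFS R` are
computed on underlying sets, so `A` is the filtered colimit of its finitely generated
subalgebras; hence `𝟙 A` factors through one of them, which must be all of `A`. Writing
`A = B ⧸ K` with `B` a polynomial ring in finitely many variables, `A` is likewise the filtered
colimit of the `B ⧸ I` with `I ≤ K` finitely generated, so `A` is a retract of a finitely
presented algebra and therefore finitely presented.
-/

theorem Algebra.FinitePresentation.of_retract {R A B : Type*} [CommRing R] [CommRing A]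
    [Algebra R A] [CommRing B] [Algebra R B] [Algebra.FinitePresentation R B]
    (q : B →ₐ[R] A) (s : A →ₐ[R] B) (hqs : q.comp s = AlgHom.id R A) :
    Algebra.FinitePresentation R A := by
  -- `q` is finitely presented since `q ∘ s = id` is and `s` is of finite type.
  have hs : s.toRingHom.FiniteType := RingHom.FiniteType.of_comp_finiteType
    (f := algebraMap R A) (by
      rw [show s.toRingHom.comp (algebraMap R A) = algebraMap R B from s.comp_algebraMap]
      exact RingHom.finiteType_algebraMap.mpr inferInstance)
  have hq : q.toRingHom.FinitePresentation := .of_comp_finiteType s.toRingHom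
    (by show (q.comp s).toRingHom.FinitePresentation; rw [hqs]; exact .id A) hs
  rw [← RingHom.finitePresentation_algebraMap, ← q.comp_algebraMap]
  exact hq.comp (RingHom.finitePresentation_algebraMap.mpr ‹_›)

namespace CommAlgCatFS

variable {R : Type u} [CommRing R]

instance (X : CommAlgCatFS R) : CommRing X.obj :=
  { (inferInstance : Ring X.obj) with mul_comm := X.property }

noncomputable def isColimitOf {J : Type u} [SmallCategory J] [IsFiltered J]
    {F : J ⥤ CommAlgCatFS R} (c : Cocone F)
    (hsurj : ∀ a : c.pt.obj, ∃ j x, a = (c.ι.app j).hom x)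
    (hinj : ∀ (j : J) (x y : (F.obj j).obj), (c.ι.app j).hom x = (c.ι.app j).hom y →
      ∃ (k : J) (f : j ⟶ k), (F.map f).hom x = (F.map f).hom y) : IsColimit c :=
  have : ReflectsColimitsOfShape J (forget (AlgCat.{u} R)) :=
    reflectsColimitsOfShape_of_reflectsIsomorphisms
  isColimitOfReflects (ObjectProperty.ι _ ⋙ forget (AlgCat R))
    (Types.FilteredColimit.isColimitOf' _ _ hsurj hinj)

def toCommAlgCat : CommAlgCatFS R ⥤ CommAlgCat.{u} R where
  obj X := CommAlgCat.of R X.obj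
  map f := CommAlgCat.ofHom f.hom.hom

instance : (toCommAlgCat (R := R)).Full where
  map_surjective f := ⟨ObjectProperty.homMk (AlgCat.ofHom f.hom), rfl⟩

instance : (toCommAlgCat (R := R)).Faithful where
  map_injective h := by
    ext x
    exact congr($h x)

instance : (toCommAlgCat (R := R)).EssSurj where
  mem_essImage A := ⟨CommAlgCatFS.of R A, ⟨Iso.refl _⟩⟩

instance : (toCommAlgCat (R := R)).IsEquivalence where

variable (R) (A : Type u) [CommRing A] [Algebra R A]

theorem isFinitelyPresentable_of_finitePresentation [Algebra.FinitePresentation R A] :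
    IsFinitelyPresentable.{u} (CommAlgCatFS.of R A) :=
  have := Cardinal.fact_isRegular_aleph0
  (isCardinalPresentable_iff_of_isEquivalence _ _
    (toCommAlgCat ⋙ (commAlgCatEquivUnder (.of R)).functor)).mp
    (CommRingCat.isFinitelyPresentable_under _ (CommRingCat.mkUnder (.of R) A)
      ((RingHom.finitePresentation_algebraMap (A := R) (B := A)).mpr ‹_›))

abbrev FGSubalgebra := {S : Subalgebra R A // S.FG}

instance : IsDirected (FGSubalgebra R A) (· ≤ ·) :=
  ⟨fun S T => ⟨⟨S.1 ⊔ T.1, S.2.sup T.2⟩, le_sup_left (a := S.1), le_sup_right (a := S.1)⟩⟩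

instance : Nonempty (FGSubalgebra R A) := ⟨⟨⊥, Subalgebra.fg_bot⟩⟩

def fgSubalgebraDiagram : FGSubalgebra R A ⥤ CommAlgCatFS R where
  obj S := CommAlgCatFS.of R S.1
  map h := ObjectProperty.homMk (AlgCat.ofHom (Subalgebra.inclusion (leOfHom h)))

def fgSubalgebraCocone : Cocone (fgSubalgebraDiagram R A) where
  pt := CommAlgCatFS.of R A
  ι.app S := ObjectProperty.homMk (AlgCat.ofHom S.1.val)

noncomputable def fgSubalgebraCoconeIsColimit :
    IsColimit (fgSubalgebraCocone R A) :=
  isColimitOf _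
    (fun (a : A) => ⟨⟨Algebra.adjoin R {a}, ⟨({a} : Finset A), by simp⟩⟩,
      ⟨a, Algebra.self_mem_adjoin_singleton R a⟩, rfl⟩)
    (fun S x y hxy => ⟨S, 𝟙 S, congrArg _ (Subtype.ext hxy)⟩)

theorem finiteType_of_isFinitelyPresentable [IsFinitelyPresentable.{u} (CommAlgCatFS.of R A)] :
    Algebra.FiniteType R A := by
  obtain ⟨S, s, hs⟩ :=
    IsFinitelyPresentable.exists_hom_of_isColimit (fgSubalgebraCoconeIsColimit R A)
      (X := CommAlgCatFS.of R A) (𝟙 _)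
  have hS : S.1 = ⊤ := eq_top_iff.mpr fun a _ => by
    rw [show a = S.1.val (s.hom a) from congr($hs.symm a)]
    exact (s.hom a).2
  exact ⟨hS ▸ S.2⟩

section

variable {R A} {B : Type u} [CommRing B] [Algebra R B] (π : B →ₐ[R] A)

abbrev FGIdealLEKer := {I : Ideal B // I.FG ∧ I ≤ RingHom.ker π}

instance : IsDirected (FGIdealLEKer π) (· ≤ ·) :=
  ⟨fun I J => ⟨⟨I.1 ⊔ J.1, Submodule.FG.sup I.2.1 J.2.1, sup_le I.2.2 J.2.2⟩,
    le_sup_left (a := I.1), le_sup_right (a := I.1)⟩⟩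

instance : Nonempty (FGIdealLEKer π) := ⟨⟨⊥, Submodule.fg_bot, bot_le⟩⟩

def quotientDiagram : FGIdealLEKer π ⥤ CommAlgCatFS R where
  obj I := CommAlgCatFS.of R (B ⧸ I.1)
  map h := ObjectProperty.homMk (AlgCat.ofHom (Ideal.Quotient.factorₐ R (leOfHom h)))

def quotientCocone : Cocone (quotientDiagram π) where
  pt := CommAlgCatFS.of R A
  ι.app I := ObjectProperty.homMk (AlgCat.ofHom (Ideal.Quotient.liftₐ I.1 π fun _ h => I.2.2 h))
  ι.naturality I J h := by
    ext x
    obtain ⟨b, rfl⟩ := Ideal.Quotient.mk_surjective x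
    rfl

noncomputable def quotientCoconeIsColimit (hπ : Function.Surjective π) :
    IsColimit (quotientCocone π) :=
  isColimitOf _
    (fun (a : A) => by
      obtain ⟨b, rfl⟩ := hπ a
      exact ⟨⟨⊥, Submodule.fg_bot, bot_le⟩, Ideal.Quotient.mk _ b, rfl⟩)
    (fun I x y hxy => by
      obtain ⟨b, rfl⟩ := Ideal.Quotient.mk_surjective x
      obtain ⟨c, rfl⟩ := Ideal.Quotient.mk_surjective y
      have hbc : π (b - c) = 0 := by
        rw [map_sub, sub_eq_zero]
        exact hxy
      refine ⟨⟨I.1 ⊔ Ideal.span {b - c}, Submodule.FG.sup I.2.1 (Submodule.fg_span_singleton _),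
        sup_le I.2.2 ((Ideal.span_singleton_le_iff_mem _).mpr hbc)⟩,
        homOfLE (le_sup_left : I.1 ≤ _), ?_⟩
      exact Ideal.Quotient.eq.mpr (Ideal.mem_sup_right (Ideal.mem_span_singleton_self _)))

end

theorem finitePresentation_of_isFinitelyPresentable
    [IsFinitelyPresentable.{u} (CommAlgCatFS.of R A)] : Algebra.FinitePresentation R A := by
  have := finiteType_of_isFinitelyPresentable R A
  obtain ⟨n, π, hπ⟩ := Algebra.FiniteType.iff_quotient_mvPolynomial''.mp this
  obtain ⟨I, s, hs⟩ :=
    IsFinitelyPresentable.exists_hom_of_isColimit (quotientCoconeIsColimit π hπ)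
      (X := CommAlgCatFS.of R A) (𝟙 _)
  have : Algebra.FinitePresentation R ((quotientDiagram π).obj I).obj := .quotient I.2.1
  exact .of_retract ((quotientCocone π).ι.app I).hom.hom
    s.hom.hom (AlgHom.ext fun a => congr($hs a))

theorem isFinitelyPresentable_iff_finitePresentation :
    IsFinitelyPresentable.{u} (CommAlgCatFS.of R A) ↔ Algebra.FinitePresentation R A :=
  ⟨fun _ => finitePresentation_of_isFinitelyPresentable R A,
    fun _ => isFinitelyPresentable_of_finitePresentation R A⟩

end CommAlgCatFS

/-- A commutative `R`-algebra `A` is a finitely presented object of the category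
`CommAlgCat R` of commutative `R`-algebras if and only if there are `n : ℕ` and a
surjective `R`-algebra homomorphism `R[x₁,…,xₙ] → A` whose kernel is a finitely
generated ideal. -/
theorem commAlgCat_isFinitelyPresentedObj_iff (R : Type u) [CommRing R]
    (A : Type u) [CommRing A] [Algebra R A] :
    CategoryTheory.IsFinitelyPresentedObj (CommAlgCatFS.of R A) ↔
      ∃ (n : ℕ) (f : MvPolynomial (Fin n) R →ₐ[R] A),
        Function.Surjective f ∧ (RingHom.ker f).FG := by
  rw [IsFinitelyPresentedObj, ← isFinitelyPresentable_iff_preservesFilteredColimits,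
    CommAlgCatFS.isFinitelyPresentable_iff_finitePresentation R A]
  exact ⟨fun h => h.out, fun h => ⟨h⟩⟩
end

section
/- Let R := MvPolynomial ℕ ℤ be the polynomial ring over ℤ in countably many variables and let A := Polynomial R be the polynomial ring in one variable over R. Then A is a finitely presented object of the category AlgCat R of R-algebras (with R acting centrally), but the corresponding object of the under-category Under R of R in RingCat, given by the canonical inclusion R → A, is NOT a finitely presented object of Under R: the hom-functor out of it in Under R does not preserve filtered colimits. -/
open CategoryTheory Limits Opposite

open Polynomial

/-!
Over a commutative ring `R`, the algebra `R[X]` corepresents the forgetful functor on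
`R`-algebras, and that functor preserves filtered colimits. In `Under R` the image of `R` need not
be central, and maps out of `R[X]` only see elements commuting with that image. Let `Sₙ` be the
free ring on `y, x₀, x₁, …` in which the `xᵢ` commute with each other and `y` commutes with the
`xᵢ` for `i < n`, under `R = ℤ[x₀, x₁, …]` via `xᵢ ↦ xᵢ`. Then `R[X] = colim Sₙ` in `Under R`,
but the identity of `R[X]` factors through no `Sₙ`: the upper triangular representation
`y ↦ diag(X, 0)`, `xᵢ ↦ xᵢ + [i = n] E₀₁` of `Sₙ` over `R[X]` shows that every element commuting
with `xₙ` maps to a constant polynomial, whereas a section would send `X` to such an element.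
-/

universe u

section AlgCat

variable {R : Type u} [CommRing R]

noncomputable def AlgCat.polynomialCorepresentableBy :
    (forget (AlgCat.{u} R)).CorepresentableBy (AlgCat.of R R[X]) where
  homEquiv :=
    { toFun f := f.hom X
      invFun b := AlgCat.ofHom (aeval b)
      left_inv f := by ext : 1; exact Polynomial.algHom_ext (by simp)
      right_inv b := by simp }
  homEquiv_comp _ _ := rfl

theorem AlgCat.preservesFilteredColimits_coyoneda_polynomial :
    PreservesFilteredColimits (coyoneda.obj (op (AlgCat.of R R[X]))) :=
  ⟨fun _ _ _ => preservesColimitsOfShape_of_natIso polynomialCorepresentableBy.toIso.symm⟩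

end AlgCat

open scoped IsMulCommutative in
noncomputable def MvPolynomial.aevalOfCommute {σ R A : Type*} [CommSemiring R] [Semiring A]
    [Algebra R A] (x : σ → A) (hx : ∀ i j, Commute (x i) (x j)) : MvPolynomial σ R →ₐ[R] A :=
  have := Algebra.isMulCommutative_adjoin R (s := Set.range x) <| by
    rintro _ ⟨i, rfl⟩ _ ⟨j, rfl⟩
    exact hx i j
  (Algebra.adjoin R (Set.range x)).val.comp
    (aeval fun i => ⟨x i, Algebra.subset_adjoin ⟨i, rfl⟩⟩)

@[simp]
theorem MvPolynomial.aevalOfCommute_X {σ R A : Type*} [CommSemiring R] [Semiring A]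
    [Algebra R A] (x : σ → A) (hx : ∀ i j, Commute (x i) (x j)) (i : σ) :
    aevalOfCommute (R := R) x hx (X i) = x i := by
  simp [aevalOfCommute]

theorem MvPolynomial.ringHom_ext_int {σ A : Type*} [Semiring A] {f g : MvPolynomial σ ℤ →+* A}
    (h : ∀ i, f (X i) = g (X i)) : f = g :=
  ringHom_ext' (RingHom.ext_int _ _) h

theorem Matrix.IsUpperTriangular.mul_apply_self {m R : Type*} [Fintype m] [LinearOrder m]
    [NonUnitalNonAssocSemiring R] {M N : Matrix m m R} (hM : M.IsUpperTriangular)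
    (hN : N.IsUpperTriangular) (i : m) : (M * N) i i = M i i * N i i := by
  rw [mul_apply, Finset.sum_eq_single i (fun k _ hk => ?_) (by simp)]
  rcases hk.lt_or_gt with h | h
  · rw [hM h, zero_mul]
  · rw [hN h, mul_zero]

@[simps]
def Matrix.upperTriangularDiagHom (R A : Type*) {m : Type*} [CommSemiring R] [Semiring A]
    [Algebra R A] [Fintype m] [LinearOrder m] (i : m) :
    blockTriangularSubalgebra R A (id : m → m) →+* A where
  toFun M := M.1 i i
  map_one' := one_apply_eq i
  map_mul' M N := IsUpperTriangular.mul_apply_self M.2 N.2 i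
  map_zero' := rfl
  map_add' _ _ := rfl

theorem Matrix.isUpperTriangular_fin_two {R : Type*} [Zero R] (a b d : R) :
    (!![a, b; 0, d]).IsUpperTriangular := by
  intro i j h
  fin_cases i <;> fin_cases j <;> simp_all

theorem Matrix.commute_fin_two_const_diag {A : Type*} [CommRing A] (a s b t : A) :
    Commute !![a, s; 0, a] !![b, t; 0, b] := by
  rw [Commute, SemiconjBy, mul_fin_two, mul_fin_two]
  ring_nf

theorem Matrix.apply_zero_zero_eq_apply_one_one_of_commute {A : Type*} [CommRing A]
    {N : Matrix (Fin 2) (Fin 2) A} {c : A} (h : Commute N !![c, 1; 0, c]) : N 0 0 = N 1 1 := by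
  have h01 := congr_fun₂ h.eq 0 1
  simp only [mul_apply, Fin.sum_univ_two, of_apply, cons_val', cons_val_zero, cons_val_one,
    empty_val', cons_val_fin_one] at h01
  linear_combination h01

namespace PolynomialUnderColimit

/-- `none` stands for `y` and `some i` for `xᵢ`. -/
inductive Rel (n : ℕ) : FreeAlgebra ℤ (Option ℕ) → FreeAlgebra ℤ (Option ℕ) → Prop
  | comm_some_some (i j : ℕ) :
      Rel n (FreeAlgebra.ι ℤ (some i) * FreeAlgebra.ι ℤ (some j))
        (FreeAlgebra.ι ℤ (some j) * FreeAlgebra.ι ℤ (some i))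
  | comm_none_some (i : ℕ) (h : i < n) :
      Rel n (FreeAlgebra.ι ℤ none * FreeAlgebra.ι ℤ (some i))
        (FreeAlgebra.ι ℤ (some i) * FreeAlgebra.ι ℤ none)

abbrev Stage (n : ℕ) : Type := RingQuot (Rel n)

def gen (n : ℕ) (z : Option ℕ) : Stage n := RingQuot.mkRingHom (Rel n) (FreeAlgebra.ι ℤ z)

theorem commute_gen_some_some (n i j : ℕ) : Commute (gen n (some i)) (gen n (some j)) := by
  simp only [Commute, SemiconjBy, gen, ← map_mul]
  exact RingQuot.mkRingHom_rel (.comm_some_some i j)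

theorem commute_gen_none_some {n i : ℕ} (h : i < n) : Commute (gen n none) (gen n (some i)) := by
  simp only [Commute, SemiconjBy, gen, ← map_mul]
  exact RingQuot.mkRingHom_rel (.comm_none_some i h)

def lift {T : Type*} [Ring T] (n : ℕ) (f : Option ℕ → T)
    (h_some : ∀ i j, Commute (f (some i)) (f (some j)))
    (h_none : ∀ i < n, Commute (f none) (f (some i))) : Stage n →+* T :=
  RingQuot.lift ⟨(FreeAlgebra.lift ℤ f).toRingHom, by
    rintro _ _ (⟨i, j⟩ | ⟨i, hi⟩)
    · simpa using (h_some i j).eq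
    · simpa using (h_none i hi).eq⟩

@[simp]
theorem lift_gen {T : Type*} [Ring T] (n : ℕ) (f : Option ℕ → T) (h_some h_none) (z : Option ℕ) :
    lift n f h_some h_none (gen n z) = f z := by
  simp [lift, gen, RingQuot.lift_mkRingHom_apply]

theorem ringHom_ext {T : Type*} [Ring T] {n : ℕ} {f g : Stage n →+* T}
    (h : ∀ z, f (gen n z) = g (gen n z)) : f = g :=
  RingQuot.ringQuot_ext f g <| RingHom.ext fun x => AlgHom.congr_fun
    (FreeAlgebra.hom_ext (f := (f.comp (RingQuot.mkRingHom _)).toIntAlgHom)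
      (g := (g.comp (RingQuot.mkRingHom _)).toIntAlgHom) (funext h)) x

noncomputable def transition (n : ℕ) : Stage n →+* Stage (n + 1) :=
  lift n (gen (n + 1)) (commute_gen_some_some _) fun _ hi => commute_gen_none_some (by omega)

@[simp]
theorem transition_gen (n : ℕ) (z : Option ℕ) : transition n (gen n z) = gen (n + 1) z :=
  lift_gen ..

noncomputable def structureMap (n : ℕ) : MvPolynomial ℕ ℤ →+* Stage n :=
  (MvPolynomial.aevalOfCommute (fun i => gen n (some i)) (commute_gen_some_some n)).toRingHom

@[simp]
theorem structureMap_X (n i : ℕ) : structureMap n (MvPolynomial.X i) = gen n (some i) :=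
  MvPolynomial.aevalOfCommute_X ..

theorem transition_comp_structureMap (n : ℕ) :
    (transition n).comp (structureMap n) = structureMap (n + 1) :=
  MvPolynomial.ringHom_ext_int fun i => by simp

noncomputable def toPolynomial (n : ℕ) : Stage n →+* (MvPolynomial ℕ ℤ)[X] :=
  lift n (fun z => z.elim X fun i => C (MvPolynomial.X i))
    (fun _ _ => Commute.all _ _) fun _ _ => Commute.all _ _

@[simp]
theorem toPolynomial_gen_none (n : ℕ) : toPolynomial n (gen n none) = X := lift_gen ..

@[simp]
theorem toPolynomial_gen_some (n i : ℕ) :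
    toPolynomial n (gen n (some i)) = C (MvPolynomial.X i) := lift_gen ..

theorem toPolynomial_comp_structureMap (n : ℕ) :
    (toPolynomial n).comp (structureMap n) = C :=
  MvPolynomial.ringHom_ext_int fun i => by simp

theorem toPolynomial_comp_transition (n : ℕ) :
    (toPolynomial (n + 1)).comp (transition n) = toPolynomial n :=
  ringHom_ext fun z => by cases z <;> simp

open Matrix

local notation "𝕋" => blockTriangularSubalgebra ℤ (MvPolynomial ℕ ℤ)[X] (id : Fin 2 → Fin 2)

noncomputable def triangularGen (n : ℕ) : Option ℕ → 𝕋
  | none => ⟨!![X, 0; 0, 0], isUpperTriangular_fin_two ..⟩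
  | some i => ⟨!![C (.X i), if i = n then 1 else 0; 0, C (.X i)], isUpperTriangular_fin_two ..⟩

noncomputable def triangularRep (n : ℕ) : Stage n →+* 𝕋 :=
  lift n (triangularGen n) (fun _ _ => Subtype.ext (commute_fin_two_const_diag ..).eq)
    fun i hi => Subtype.ext <| by
      simp only [triangularGen, if_neg hi.ne, MulMemClass.coe_mul, mul_fin_two]
      ring_nf

@[simp]
theorem triangularRep_gen (n : ℕ) (z : Option ℕ) :
    triangularRep n (gen n z) = triangularGen n z :=
  lift_gen ..

theorem upperTriangularDiagHom_zero_comp_triangularRep (n : ℕ) :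
    (upperTriangularDiagHom ℤ _ 0).comp (triangularRep n) = toPolynomial n :=
  ringHom_ext fun z => by cases z <;> simp [triangularGen]

theorem upperTriangularDiagHom_one_comp_triangularRep (n : ℕ) :
    (upperTriangularDiagHom ℤ _ 1).comp (triangularRep n) =
      (C.comp constantCoeff).comp (toPolynomial n) :=
  ringHom_ext fun z => by cases z <;> simp [triangularGen]

theorem exists_toPolynomial_eq_C_of_commute {n : ℕ} {u : Stage n}
    (h : Commute u (gen n (some n))) : ∃ r, toPolynomial n u = C r := by
  have hmat : Commute (triangularRep n u).1 !![C (.X n), 1; 0, C (.X n)] := by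
    simpa [triangularGen] using (h.map (triangularRep n)).map (𝕋).val
  refine ⟨constantCoeff (toPolynomial n u), ?_⟩
  have h0 := RingHom.congr_fun (upperTriangularDiagHom_zero_comp_triangularRep n) u
  have h1 := RingHom.congr_fun (upperTriangularDiagHom_one_comp_triangularRep n) u
  exact h0.symm.trans ((apply_zero_zero_eq_apply_one_one_of_commute hmat).trans h1)

noncomputable def diagram : ℕ ⥤ Under (RingCat.of (MvPolynomial ℕ ℤ)) :=
  Functor.ofSequence (X := fun n => Under.mk (RingCat.ofHom (structureMap n))) fun n =>
    Under.homMk (RingCat.ofHom (transition n)) (RingCat.hom_ext (transition_comp_structureMap n))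

theorem diagram_map_succ_right (n : ℕ) :
    (diagram.map (homOfLE n.le_succ)).right = RingCat.ofHom (transition n) :=
  congrArg Under.Hom.right (Functor.ofSequence_map_homOfLE_succ _ n)

noncomputable def cocone : Cocone diagram where
  pt := Under.mk (RingCat.ofHom (algebraMap (MvPolynomial ℕ ℤ) (MvPolynomial ℕ ℤ)[X]))
  ι := NatTrans.ofSequence
    (fun n => Under.homMk (RingCat.ofHom (toPolynomial n))
      (RingCat.hom_ext (toPolynomial_comp_structureMap n)))
    fun n => by
      ext : 1
      simp only [Functor.const_obj_map, Under.comp_right, diagram_map_succ_right]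
      exact RingCat.hom_ext (toPolynomial_comp_transition n)

section IsColimit

variable (t : Cocone diagram)

theorem app_right_transition (n : ℕ) (x : Stage n) :
    (t.ι.app (n + 1)).right.hom (transition n x) = (t.ι.app n).right.hom x := by
  have h := congrArg Under.Hom.right (t.w (homOfLE n.le_succ))
  rw [Under.comp_right, diagram_map_succ_right] at h
  exact ConcreteCategory.congr_hom h x

theorem app_right_structureMap (n : ℕ) (r : MvPolynomial ℕ ℤ) :
    (t.ι.app n).right.hom (structureMap n r) = t.pt.hom.hom r :=
  ConcreteCategory.congr_hom (Under.w (t.ι.app n)) r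

theorem app_right_gen_none (n : ℕ) :
    (t.ι.app n).right.hom (gen n none) = (t.ι.app 0).right.hom (gen 0 none) := by
  induction n with
  | zero => rfl
  | succ n ih => rw [← ih, ← transition_gen, app_right_transition]

theorem commute_hom_app_right_gen_none (r : MvPolynomial ℕ ℤ) :
    Commute (t.pt.hom.hom r) ((t.ι.app 0).right.hom (gen 0 none)) := by
  induction r using MvPolynomial.induction_on with
  | C a =>
    rw [eq_intCast MvPolynomial.C a, map_intCast]
    exact Int.cast_commute a _
  | add p q hp hq => simpa only [map_add] using hp.add_left hq
  | mul_X p i hp =>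
    rw [map_mul]
    refine hp.mul_left ?_
    rw [← app_right_structureMap t (i + 1), structureMap_X, ← app_right_gen_none t (i + 1)]
    exact ((commute_gen_none_some i.lt_succ_self).map _).symm

noncomputable def descRingHom : (MvPolynomial ℕ ℤ)[X] →+* t.pt.right :=
  eval₂RingHom' _ _ (commute_hom_app_right_gen_none t)

@[simp]
theorem descRingHom_C (r : MvPolynomial ℕ ℤ) : descRingHom t (C r) = t.pt.hom.hom r :=
  eval₂_C ..

@[simp]
theorem descRingHom_X : descRingHom t X = (t.ι.app 0).right.hom (gen 0 none) :=
  eval₂_X ..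

noncomputable def desc : cocone.pt ⟶ t.pt :=
  Under.homMk (RingCat.ofHom (descRingHom t)) (RingCat.hom_ext (RingHom.ext (descRingHom_C t)))

end IsColimit

noncomputable def isColimit : IsColimit cocone where
  desc := desc
  fac t n := by
    ext : 1
    refine RingCat.hom_ext ?_
    change (descRingHom t).comp (toPolynomial n) = (t.ι.app n).right.hom
    refine ringHom_ext fun z => ?_
    cases z with
    | none =>
      rw [RingHom.comp_apply, toPolynomial_gen_none, descRingHom_X]
      exact (app_right_gen_none t n).symm
    | some i =>
      rw [RingHom.comp_apply, toPolynomial_gen_some, descRingHom_C, ← structureMap_X]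
      exact (app_right_structureMap t n _).symm
  uniq t m hm := by
    ext : 1
    refine RingCat.hom_ext (Polynomial.ringHom_ext (fun r => ?_) ?_)
    · change m.right.hom (C r) = descRingHom t (C r)
      rw [descRingHom_C]
      exact ConcreteCategory.congr_hom (Under.w m) r
    · change m.right.hom X = descRingHom t X
      rw [descRingHom_X, ← toPolynomial_gen_none 0]
      exact ConcreteCategory.congr_hom (congrArg Under.Hom.right (hm 0)) (gen 0 none)

theorem not_preservesFilteredColimits_coyoneda :
    ¬ PreservesFilteredColimits (coyoneda.obj (op cocone.pt)) := by
  intro _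
  obtain ⟨n, (g : cocone.pt ⟶ diagram.obj n), hg⟩ := Types.jointly_surjective _
    (isColimitOfPreserves (coyoneda.obj (op cocone.pt)) isColimit) (𝟙 cocone.pt)
  let s : (MvPolynomial ℕ ℤ)[X] →+* Stage n := g.right.hom
  have hsection (p : (MvPolynomial ℕ ℤ)[X]) : toPolynomial n (s p) = p :=
    ConcreteCategory.congr_hom (congrArg Under.Hom.right hg) p
  have hC (r : MvPolynomial ℕ ℤ) : s (C r) = structureMap n r :=
    ConcreteCategory.congr_hom (Under.w g) r
  have hcomm : Commute (s X) (gen n (some n)) := by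
    rw [← structureMap_X, ← hC]
    exact (Commute.all _ _).map s
  obtain ⟨r, hr⟩ := exists_toPolynomial_eq_C_of_commute hcomm
  exact X_ne_C r (by rw [← hr, hsection])

end PolynomialUnderColimit

/-- Let `R := ℤ[x₀, x₁, x₂, …]` be the polynomial ring over `ℤ` in countably many
variables and `A := R[y]` the polynomial ring in one variable over `R`.  Then `A` is a
finitely presented object of the category `AlgebraCat R` of `R`-algebras (with `R` acting
centrally), but the object `R → A` (the canonical inclusion) of the under-category
`Under R` in `RingCat` is *not* a finitely presented object of `Under R`. -/
theorem polynomial_finitelyPresented_in_algebraCat_not_in_under :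
    CategoryTheory.IsFinitelyPresentedObj
        (AlgCat.of (MvPolynomial ℕ ℤ) (Polynomial (MvPolynomial ℕ ℤ))) ∧
      ¬ CategoryTheory.IsFinitelyPresentedObj
          (Under.mk (RingCat.ofHom
            (algebraMap (MvPolynomial ℕ ℤ) (Polynomial (MvPolynomial ℕ ℤ))))) :=
  ⟨AlgCat.preservesFilteredColimits_coyoneda_polynomial,
    PolynomialUnderColimit.not_preservesFilteredColimits_coyoneda⟩
end

section
/- Let k be a field. Consider the first projection π₁ : k × k → k and the diagonal ring homomorphism δ : k × k → Matrix (Fin 2) (Fin 2) k sending (a, b) to the diagonal matrix with entries a, b. Then the pushout of π₁ and δ in the category RingCat of rings, i.e., the free product k ∗_{k⊕k} M₂(k), is the trivial (zero) ring: it has exactly one element. The same holds with the second projection π₂ in place of π₁. -/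
/-!
In the pushout, `δ (0, 1) = E₂₂` is identified with `π₁ (0, 1) = 0`. But `E₂₂` generates `M₂(k)`
as a two-sided ideal (`E₁₁ = E₁₂ E₂₂ E₂₁` and `1 = E₁₁ + E₂₂`), so `1` maps to `0`. For `π₂` the
roles of `E₁₁` and `E₂₂` are swapped.
-/

open CategoryTheory Limits

/-- The diagonal ring homomorphism `k × k → M₂(k)` sending `(a, b)` to the diagonal
matrix with entries `a`, `b`. -/
def diagRingHom (k : Type) [Field k] : (k × k) →+* Matrix (Fin 2) (Fin 2) k where
  toFun p := Matrix.diagonal ![p.1, p.2]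
  map_one' := by
    show Matrix.diagonal _ = _
    have h : ![(1 : k × k).1, (1 : k × k).2] = fun _ => (1 : k) := by funext i; fin_cases i <;> rfl
    rw [h, Matrix.diagonal_one]
  map_mul' p q := by
    show Matrix.diagonal _ = Matrix.diagonal _ * Matrix.diagonal _
    rw [Matrix.diagonal_mul_diagonal]
    funext i
    fin_cases i <;> rfl
  map_zero' := by
    show Matrix.diagonal _ = _
    have h : ![(0 : k × k).1, (0 : k × k).2] = fun _ => (0 : k) := by funext i; fin_cases i <;> rfl
    rw [h, Matrix.diagonal_zero]
  map_add' p q := by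
    show Matrix.diagonal _ = Matrix.diagonal _ + Matrix.diagonal _
    rw [Matrix.diagonal_add]
    funext i
    fin_cases i <;> rfl

theorem Matrix.subsingleton_of_ringHom_single_eq_zero {n α R : Type*} [Fintype n] [DecidableEq n]
    [Semiring α] [Semiring R] (f : Matrix n n α →+* R) (i : n)
    (hi : f (Matrix.single i i 1) = 0) : Subsingleton R := by
  have hunits (j : n) : f (Matrix.single j j 1) = 0 := by
    have hfactor : Matrix.single j i (1 : α) * Matrix.single i i 1 * Matrix.single i j 1 =
        Matrix.single j j 1 := by
      simp only [Matrix.single_mul_single_same, mul_one]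
    rw [← hfactor, map_mul, map_mul, hi, mul_zero, zero_mul]
  refine subsingleton_of_zero_eq_one ?_
  rw [← map_one f, ← Matrix.sum_single_one, map_sum]
  exact (Finset.sum_eq_zero fun j _ => hunits j).symm

theorem RingCat.pushout_inr_apply_eq_zero {A B C : RingCat} (f : A ⟶ B) (g : A ⟶ C) {a : A}
    (ha : f a = 0) : pushout.inr f g (g a) = 0 := by
  rw [← ConcreteCategory.comp_apply, ← pushout.condition, ConcreteCategory.comp_apply, ha,
    map_zero]

theorem diagRingHom_apply_zero_one (k : Type) [Field k] :
    diagRingHom k (0, 1) = Matrix.single 1 1 1 := by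
  rw [← Matrix.diagonal_single]
  exact congrArg Matrix.diagonal (by ext i; fin_cases i <;> rfl)

theorem diagRingHom_apply_one_zero (k : Type) [Field k] :
    diagRingHom k (1, 0) = Matrix.single 0 0 1 := by
  rw [← Matrix.diagonal_single]
  exact congrArg Matrix.diagonal (by ext i; fin_cases i <;> rfl)

/-- For a field `k`, the pushout in `RingCat` of the first projection `π₁ : k × k → k`
and the diagonal embedding `δ : k × k → M₂(k)`, i.e. the free product `k ∗_{k⊕k} M₂(k)`,
is the trivial (one-element) ring; and the same holds for the second projection `π₂`. -/
theorem pushout_proj_diag_matrix_subsingleton (k : Type) [Field k] :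
    Subsingleton
        (pushout (RingCat.ofHom (RingHom.fst k k)) (RingCat.ofHom (diagRingHom k)) : RingCat) ∧
      Subsingleton
        (pushout (RingCat.ofHom (RingHom.snd k k)) (RingCat.ofHom (diagRingHom k)) : RingCat) := by
  constructor
  · refine Matrix.subsingleton_of_ringHom_single_eq_zero
      (pushout.inr (RingCat.ofHom (RingHom.fst k k)) (RingCat.ofHom (diagRingHom k))).hom 1 ?_
    rw [← diagRingHom_apply_zero_one]
    exact RingCat.pushout_inr_apply_eq_zero _ (RingCat.ofHom (diagRingHom k)) rfl
  · refine Matrix.subsingleton_of_ringHom_single_eq_zero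
      (pushout.inr (RingCat.ofHom (RingHom.snd k k)) (RingCat.ofHom (diagRingHom k))).hom 0 ?_
    rw [← diagRingHom_apply_one_zero]
    exact RingCat.pushout_inr_apply_eq_zero _ (RingCat.ofHom (diagRingHom k)) rfl
end

section
/- Let A be a commutative ring and let f : A → B and g : A → C be ring homomorphisms that are epimorphisms in the category of rings and such that B and C are flat as A-modules (B and C are then automatically commutative). Then the canonical ring homomorphism from the pushout B ∗_A C of f and g in the category RingCat of rings to the tensor product B ⊗_A C (the pushout in the category of commutative rings) is an isomorphism; in particular, the pushout of f and g in RingCat is commutative. -/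
/-!
If `A → B` is an epimorphism of rings, `p : B → D` is a ring homomorphism and `d ∈ D` commutes
with the image of `A`, then `d` commutes with the image of `p`: the ring homomorphisms
`x ↦ !![p x, 0; 0, p x]` and its conjugate by the unit `!![1, d; 0, 1]` agree on `A`, hence on
`B`. For the legs of a cocone over `B ← A → C` this makes the images of `B` and `C` commute, so
the cocone factors uniquely through `B ⊗[A] C`. For `p = id` it shows that `B` is commutative;
so is `C`, hence `B ⊗[A] C` and the pushout are commutative.
-/

open CategoryTheory Limits TensorProduct

universe u

namespace Matrix

variable {D : Type*} [Ring D]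

def innerDerivationHom (d : D) : D →+* Matrix (Fin 2) (Fin 2) D where
  toFun x := !![x, d * x - x * d; 0, x]
  map_one' := by simp [one_fin_two]
  map_mul' x y := by
    simp only [mul_fin_two, mul_zero, zero_mul, add_zero, zero_add]
    congr 1; noncomm_ring
  map_zero' := by simp [← Matrix.zero_empty]
  map_add' x y := by
    simp only [of_add_of, cons_add_cons, empty_add_empty, zero_add]
    congr 1; noncomm_ring

end Matrix

namespace RingCat

theorem commute_of_epi {R A D : RingCat.{u}} (f : R ⟶ A) [Epi f] (p : A ⟶ D) {d : D}
    (hd : ∀ r, Commute d (p (f r))) (a : A) : Commute d (p a) := by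
  have h : f ≫ p ≫ ofHom (Matrix.scalar (Fin 2)) =
      f ≫ p ≫ ofHom (Matrix.innerDerivationHom d) := by
    ext r : 2
    simp [Matrix.innerDerivationHom, Matrix.diagonal_fin_two, (hd r).eq]
  have := congr($((cancel_epi f).mp h) a 0 1)
  exact sub_eq_zero.mp (by simpa [Matrix.innerDerivationHom] using this.symm)

theorem commute_of_epi_algebraMap {R A : Type u} [CommRing R] [Ring A] [Algebra R A]
    [Epi (ofHom (algebraMap R A))] (a b : A) : Commute a b :=
  commute_of_epi (ofHom (algebraMap R A)) (𝟙 _) (fun r => (Algebra.commutes r a).symm) b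

end RingCat

namespace Algebra.TensorProduct

variable {R A B : Type*} [CommSemiring R] [Semiring A] [Semiring B] [Algebra R A] [Algebra R B]

/- `D` need not be an `R`-algebra, but the centralizer of the image of `R` is one, and it
contains the images of `f` and `g`. -/
def liftRingHom {D : Type*} [Semiring D] (f : A →+* D) (g : B →+* D)
    (hfg_alg : f.comp (algebraMap R A) = g.comp (algebraMap R B))
    (hfg : ∀ a b, Commute (f a) (g b)) : A ⊗[R] B →+* D :=
  let S := Subsemiring.centralizer (Set.range (f.comp (algebraMap R A)))
  have mem_S {x : D} (hx : ∀ r, Commute (f.comp (algebraMap R A) r) x) : x ∈ S := by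
    rintro _ ⟨r, rfl⟩; exact hx r
  letI : Algebra R S := RingHom.toAlgebra'
    ((f.comp (algebraMap R A)).codRestrict S fun r => mem_S fun r' =>
      (Algebra.commute_algebraMap_left r' (algebraMap R A r)).map f)
    fun r x => Subtype.ext (x.2 _ ⟨r, rfl⟩)
  let f' : A →ₐ[R] S :=
    { f.codRestrict S fun a => mem_S fun r => (Algebra.commute_algebraMap_left r a).map f with
      commutes' := fun _ => rfl }
  let g' : B →ₐ[R] S :=
    { g.codRestrict S fun b => mem_S fun r =>
        hfg_alg ▸ (Algebra.commute_algebraMap_left r b).map g with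
      commutes' := fun r => Subtype.ext congr($hfg_alg r).symm }
  S.subtype.comp (lift f' g' fun a b => Subtype.ext (hfg a b)).toRingHom

@[simp]
theorem liftRingHom_tmul {D : Type*} [Semiring D] (f : A →+* D) (g : B →+* D)
    (hfg_alg : f.comp (algebraMap R A) = g.comp (algebraMap R B))
    (hfg : ∀ a b, Commute (f a) (g b)) (a : A) (b : B) :
    liftRingHom f g hfg_alg hfg (a ⊗ₜ b) = f a * g b :=
  rfl

theorem commute_of_forall_commute (hA : ∀ a a' : A, Commute a a')
    (hB : ∀ b b' : B, Commute b b') (x y : A ⊗[R] B) : Commute x y := by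
  induction x with
  | zero => exact .zero_left y
  | add x x' hx hx' => exact hx.add_left hx'
  | tmul a b =>
    induction y with
    | zero => exact .zero_right _
    | add y y' hy hy' => exact hy.add_right hy'
    | tmul a' b' => exact (hA a a').tmul (hB b b')

end Algebra.TensorProduct

open Algebra.TensorProduct in
theorem RingCat.isPushout_tensorProduct_of_epi {A B C : Type u} [CommRing A] [Ring B] [Ring C]
    [Algebra A B] [Algebra A C] [Epi (ofHom (algebraMap A B))] :
    IsPushout (ofHom (algebraMap A B)) (ofHom (algebraMap A C))
      (ofHom (includeLeft (S := A) : B →ₐ[A] B ⊗[A] C).toRingHom)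
      (ofHom (includeRight : C →ₐ[A] B ⊗[A] C).toRingHom) := by
  have w : ofHom (algebraMap A B) ≫ ofHom (includeLeft (S := A) : B →ₐ[A] B ⊗[A] C).toRingHom =
      ofHom (algebraMap A C) ≫ ofHom (includeRight : C →ₐ[A] B ⊗[A] C).toRingHom :=
    congrArg ofHom includeLeftRingHom_comp_algebraMap
  have commute (s : PushoutCocone (ofHom (algebraMap A B)) (ofHom (algebraMap A C))) (b : B)
      (c : C) : Commute (s.inl b) (s.inr c) := by
    refine (commute_of_epi (ofHom (algebraMap A B)) s.inl (fun a => ?_) b).symm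
    rw [← ConcreteCategory.comp_apply, s.condition]
    exact ((Algebra.commute_algebraMap_left a c).map s.inr.hom).symm
  let lift (s : PushoutCocone (ofHom (algebraMap A B)) (ofHom (algebraMap A C))) :
      of (B ⊗[A] C) ⟶ s.pt :=
    ofHom (liftRingHom s.inl.hom s.inr.hom congr(($s.condition).hom) (commute s))
  have lift_inl s : ofHom (includeLeft (S := A) (B := C)).toRingHom ≫ lift s = s.inl := by
    ext; simp [lift]
  have lift_inr s : ofHom (includeRight (A := B)).toRingHom ≫ lift s = s.inr := by
    ext; simp [lift]
  refine .of_isColimit (PushoutCocone.IsColimit.mk w lift lift_inl lift_inr fun s m hl hr => ?_)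
  exact hom_ext <| ringHom_ext congr(($(hl.trans (lift_inl s).symm)).hom)
    congr(($(hr.trans (lift_inr s).symm)).hom)

theorem flat_epi_pushout_eq_tensorProduct_general
    (A : Type u) [CommRing A] (B C : Type u) [Ring B] [Ring C]
    [Algebra A B] [Algebra A C]
    (hB : Epi (RingCat.ofHom (algebraMap A B))) (hC : Epi (RingCat.ofHom (algebraMap A C))) :
    IsPushout (RingCat.ofHom (algebraMap A B)) (RingCat.ofHom (algebraMap A C))
        (RingCat.ofHom
          (Algebra.TensorProduct.includeLeft (S := A) : B →ₐ[A] B ⊗[A] C).toRingHom)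
        (RingCat.ofHom (Algebra.TensorProduct.includeRight : C →ₐ[A] B ⊗[A] C).toRingHom) ∧
      ∀ x y : (pushout (RingCat.ofHom (algebraMap A B)) (RingCat.ofHom (algebraMap A C)) :
          RingCat), x * y = y * x := by
  have hP := RingCat.isPushout_tensorProduct_of_epi (A := A) (B := B) (C := C)
  have tensor_comm : ∀ x y : B ⊗[A] C, Commute x y :=
    Algebra.TensorProduct.commute_of_forall_commute (RingCat.commute_of_epi_algebraMap (R := A))
      (RingCat.commute_of_epi_algebraMap (R := A))
  let e := hP.isoPushout.ringCatIsoToRingEquiv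
  refine ⟨hP, fun x y => e.symm.injective ?_⟩
  rw [map_mul, map_mul]
  exact (tensor_comm _ _).eq

/-- Let `A` be a commutative ring and let `f : A → B` and `g : A → C` be ring
homomorphisms that are epimorphisms in the category of rings such that `B` and `C` are
flat as `A`-modules.  Then the canonical ring homomorphism from the pushout `B ∗_A C` of
`f` and `g` in `RingCat` to the tensor product `B ⊗[A] C` (the pushout in the category of
commutative rings) is an isomorphism — i.e. the square formed by `f`, `g` and the two
inclusions `B → B ⊗[A] C`, `C → B ⊗[A] C` is a pushout square in `RingCat` — and, in
particular, the pushout of `f` and `g` in `RingCat` is commutative. -/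
theorem flat_epi_pushout_eq_tensorProduct
    (A : Type u) [CommRing A] (B C : Type u) [Ring B] [Ring C]
    [Algebra A B] [Algebra A C]
    (hB : Epi (RingCat.ofHom (algebraMap A B))) (hC : Epi (RingCat.ofHom (algebraMap A C)))
    (hBflat : Module.Flat A B) (hCflat : Module.Flat A C) :
    IsPushout (RingCat.ofHom (algebraMap A B)) (RingCat.ofHom (algebraMap A C))
        (RingCat.ofHom
          (Algebra.TensorProduct.includeLeft (S := A) : B →ₐ[A] B ⊗[A] C).toRingHom)
        (RingCat.ofHom (Algebra.TensorProduct.includeRight : C →ₐ[A] B ⊗[A] C).toRingHom) ∧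
      ∀ x y : (pushout (RingCat.ofHom (algebraMap A B)) (RingCat.ofHom (algebraMap A C)) :
          RingCat), x * y = y * x :=
  flat_epi_pushout_eq_tensorProduct_general A B C hB hC
end
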